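/- Let q > 2. Then I_q(α) → π/√(q-2) as α → α*(q) from the left. -/

import Mathlib

/-!
At `α = α*` the function `f = fQ q α*` has a double zero at `t* = √(q / (q - 2))`, where
`f''(t*) = -2 (q - 2)`, and is negative elsewhere on `(0, ∞)`; so as `α ↑ α*` both roots
`x₀ < t* < x₁` of `fQ q α` tend to `t*`. Since `f''` is decreasing, it lies between
`f''(x₁) = -2M` and `f''(x₀) = -2m` on `[x₀, x₁]`, and concavity of `f - m (t - x₀)(x₁ - t)` and
convexity of `f - M (t - x₀)(x₁ - t)` give `m (t - x₀)(x₁ - t) ≤ f ≤ M (t - x₀)(x₁ - t)`.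
As `∫ dt / √((t - a)(b - t)) = π` over `[a, b]`, `I_q(α)` lies between `π / √M` and `π / √m`,
and `m, M → q - 2`.
-/

open Set Filter MeasureTheory

noncomputable def fQ (q α t : ℝ) : ℝ := t ^ 2 - 1 - α * t ^ q

noncomputable def alphaStar (q : ℝ) : ℝ := 2 / (q - 2) * ((q - 2) / q) ^ (q / 2)

noncomputable def x0 (q α : ℝ) : ℝ := sInf {t : ℝ | 0 < t ∧ fQ q α t = 0}

noncomputable def x1 (q α : ℝ) : ℝ := sSup {t : ℝ | 0 < t ∧ fQ q α t = 0}

noncomputable def Iq (q α : ℝ) : ℝ := ∫ t in x0 q α..x1 q α, 1 / Real.sqrt (fQ q α t)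

noncomputable def fQd1 (q α t : ℝ) : ℝ := 2 * t - α * q * t ^ (q - 1)

noncomputable def fQd2 (q α t : ℝ) : ℝ := 2 - α * q * (q - 1) * t ^ (q - 2)

noncomputable def fQd3 (q α t : ℝ) : ℝ := -(α * q * (q - 1) * (q - 2) * t ^ (q - 3))

noncomputable def psiQ (q α t : ℝ) : ℝ := fQd1 q α t ^ 2 - 2 * fQ q α t * fQd2 q α t

open Real Topology

section Calculus

variable {f f' f'' : ℝ → ℝ} {a b : ℝ}

theorem mul_sub_mul_sub_le_of_deriv2_le {m : ℝ} (hf : ContinuousOn f (Icc a b))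
    (hf' : ∀ t ∈ Ioo a b, HasDerivAt f (f' t) t) (hf'' : ∀ t ∈ Ioo a b, HasDerivAt f' (f'' t) t)
    (ha : f a = 0) (hb : f b = 0) (hm : ∀ t ∈ Ioo a b, f'' t ≤ -2 * m) {t : ℝ}
    (ht : t ∈ Icc a b) : m * ((t - a) * (b - t)) ≤ f t := by
  have hab : a ≤ b := ht.1.trans ht.2
  have hconc : ConcaveOn ℝ (Icc a b) fun s => f s - m * ((s - a) * (b - s)) := by
    refine concaveOn_of_hasDerivWithinAt2_nonpos (convex_Icc a b)
      (f' := fun s => f' s - m * (a + b - 2 * s)) (f'' := fun s => f'' s + 2 * m)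
      (hf.sub (by fun_prop)) ?_ ?_ ?_ <;> rw [interior_Icc] <;> intro s hs
    · have hp : HasDerivAt (fun s => (s - a) * (b - s)) (a + b - 2 * s) s := by
        refine (((hasDerivAt_id s).sub_const a).mul ((hasDerivAt_id s).const_sub b)).congr_deriv ?_
        simp only [id_eq]; ring
      exact ((hf' s hs).sub (hp.const_mul m)).hasDerivWithinAt
    · have hp : HasDerivAt (fun s => a + b - 2 * s) (-2) s := by
        simpa using ((hasDerivAt_id s).const_mul 2).const_sub (a + b)
      refine ((hf'' s hs).sub (hp.const_mul m)).hasDerivWithinAt.congr_deriv ?_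
      ring
    · linarith [hm s hs]
  have := hconc.ge_on_segment (left_mem_Icc.2 hab) (right_mem_Icc.2 hab)
    (by rwa [segment_eq_Icc hab])
  simp only [ha, hb, sub_self, zero_mul, mul_zero, min_self] at this
  linarith

theorem hasDerivAt_arcsin_affine {t : ℝ} (ht : t ∈ Ioo a b) :
    HasDerivAt (fun s => arcsin ((2 * s - a - b) / (b - a))) (1 / √((t - a) * (b - t))) t := by
  obtain ⟨hat, htb⟩ := ht
  have hba : 0 < b - a := by linarith
  have hu : HasDerivAt (fun s => (2 * s - a - b) / (b - a)) (2 / (b - a)) t := by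
    simpa using ((((hasDerivAt_id t).const_mul 2).sub_const a).sub_const b).div_const (b - a)
  have h1 : (2 * t - a - b) / (b - a) ≠ -1 := by
    rw [Ne, div_eq_iff hba.ne']; intro h; linarith
  have h2 : (2 * t - a - b) / (b - a) ≠ 1 := by
    rw [Ne, div_eq_iff hba.ne']; intro h; linarith
  refine ((hasDerivAt_arcsin h1 h2).comp t hu).congr_deriv ?_
  have hsq : 1 - ((2 * t - a - b) / (b - a)) ^ 2 = (2 / (b - a)) ^ 2 * ((t - a) * (b - t)) := by
    field_simp; ring
  rw [hsq, sqrt_mul (by positivity), sqrt_sq (by positivity)]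
  have : 0 < √((t - a) * (b - t)) := sqrt_pos.2 (mul_pos (by linarith) (by linarith))
  field_simp

theorem intervalIntegrable_one_div_sqrt_mul_sub_mul_sub (hab : a < b) :
    IntervalIntegrable (fun t => 1 / √((t - a) * (b - t))) volume a b := by
  refine intervalIntegral.intervalIntegrable_deriv_of_nonneg
    (g := fun s => arcsin ((2 * s - a - b) / (b - a))) (by fun_prop) ?_ (fun t _ => by positivity)
  simpa [hab.le] using fun t ht => hasDerivAt_arcsin_affine ht

theorem integral_one_div_sqrt_mul_sub_mul_sub (hab : a < b) :
    ∫ t in a..b, 1 / √((t - a) * (b - t)) = π := by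
  rw [intervalIntegral.integral_eq_sub_of_hasDerivAt_of_le hab.le (by fun_prop)
    (fun t ht => hasDerivAt_arcsin_affine ht) (intervalIntegrable_one_div_sqrt_mul_sub_mul_sub hab)]
  have hba : b - a ≠ 0 := by linarith
  rw [show (2 * b - a - b) / (b - a) = 1 by field_simp; ring,
    show (2 * a - a - b) / (b - a) = -1 by field_simp; ring, arcsin_one, arcsin_neg_one]
  ring

theorem intervalIntegrable_and_integral_one_div_sqrt_const_mul (hab : a < b) {k : ℝ} (hk : 0 ≤ k) :
    IntervalIntegrable (fun t => 1 / √(k * ((t - a) * (b - t)))) volume a b ∧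
      ∫ t in a..b, 1 / √(k * ((t - a) * (b - t))) = π / √k := by
  have hfun : (fun t => 1 / √(k * ((t - a) * (b - t)))) =
      fun t => (√k)⁻¹ * (1 / √((t - a) * (b - t))) := by
    ext t; rw [sqrt_mul hk, one_div, mul_inv, one_div]
  rw [hfun, intervalIntegral.integral_const_mul, integral_one_div_sqrt_mul_sub_mul_sub hab,
    inv_mul_eq_div]
  exact ⟨(intervalIntegrable_one_div_sqrt_mul_sub_mul_sub hab).const_mul _, rfl⟩

theorem integral_one_div_sqrt_mem_Icc {g : ℝ → ℝ} {m M : ℝ} (hab : a < b) (hm : 0 < m)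
    (hg : Measurable g) (hlow : ∀ t ∈ Ioo a b, m * ((t - a) * (b - t)) ≤ g t)
    (hup : ∀ t ∈ Ioo a b, g t ≤ M * ((t - a) * (b - t))) :
    ∫ t in a..b, 1 / √(g t) ∈ Icc (π / √M) (π / √m) := by
  have hp : ∀ t ∈ Ioo a b, 0 < (t - a) * (b - t) := fun t ht =>
    mul_pos (sub_pos.2 ht.1) (sub_pos.2 ht.2)
  have hmid : (a + b) / 2 ∈ Ioo a b := ⟨by linarith, by linarith⟩
  have hM : 0 ≤ M := hm.le.trans <| le_of_mul_le_mul_right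
    ((hlow _ hmid).trans (hup _ hmid)) (hp _ hmid)
  have hg_le : ∀ t ∈ Ioo a b, 1 / √(g t) ≤ 1 / √(m * ((t - a) * (b - t))) := fun t ht =>
    one_div_le_one_div_of_le (sqrt_pos.2 (mul_pos hm (hp t ht))) (sqrt_le_sqrt (hlow t ht))
  have hle_g : ∀ t ∈ Ioo a b, 1 / √(M * ((t - a) * (b - t))) ≤ 1 / √(g t) := fun t ht =>
    one_div_le_one_div_of_le (sqrt_pos.2 ((mul_pos hm (hp t ht)).trans_le (hlow t ht)))
      (sqrt_le_sqrt (hup t ht))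
  obtain ⟨hint_m, hval_m⟩ := intervalIntegrable_and_integral_one_div_sqrt_const_mul hab hm.le
  obtain ⟨hint_M, hval_M⟩ := intervalIntegrable_and_integral_one_div_sqrt_const_mul hab hM
  have hint_g : IntervalIntegrable (fun t => 1 / √(g t)) volume a b := by
    rw [intervalIntegrable_iff_integrableOn_Ioo_of_le hab.le] at hint_m ⊢
    refine hint_m.mono' (hg.sqrt.const_div 1).aestronglyMeasurable
      (ae_restrict_of_forall_mem measurableSet_Ioo fun t ht => ?_)
    rw [norm_of_nonneg (by positivity)]
    exact hg_le t ht
  rw [← hval_m, ← hval_M]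
  exact ⟨intervalIntegral.integral_mono_on_of_le_Ioo hab.le hint_M hint_g hle_g,
    intervalIntegral.integral_mono_on_of_le_Ioo hab.le hint_g hint_m hg_le⟩

end Calculus

theorem rpow_eq_sq_mul_rpow_sub_two {t : ℝ} (ht : 0 < t) (q : ℝ) : t ^ q = t ^ 2 * t ^ (q - 2) := by
  rw [← rpow_natCast, ← rpow_add ht]; norm_num

section Profile

variable {q α t : ℝ}

theorem hasDerivAt_fQ (ht : t ≠ 0) : HasDerivAt (fQ q α) (fQd1 q α t) t := by
  refine ((((hasDerivAt_pow 2 t).sub_const 1).sub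
    ((hasDerivAt_rpow_const (p := q) (Or.inl ht)).const_mul α))).congr_deriv ?_
  simp only [fQd1]; ring

theorem hasDerivAt_fQd1 (ht : t ≠ 0) : HasDerivAt (fQd1 q α) (fQd2 q α t) t := by
  refine (((hasDerivAt_id t).const_mul 2).sub
    ((hasDerivAt_rpow_const (p := q - 1) (Or.inl ht)).const_mul (α * q))).congr_deriv ?_
  simp only [fQd2]; ring_nf

theorem continuous_fQ (hq : 0 ≤ q) : Continuous (fQ q α) :=
  ((continuous_pow 2).sub continuous_const).sub (continuous_const.mul (continuous_rpow_const hq))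

theorem measurable_fQ : Measurable (fQ q α) :=
  ((measurable_id.pow_const 2).sub measurable_const).sub
    (measurable_const.mul (measurable_id.pow_const q))

theorem fQ_zero (hq : q ≠ 0) : fQ q α 0 = -1 := by
  simp [fQ, zero_rpow hq]

theorem fQ_eq_add (α' : ℝ) : fQ q α t = fQ q α' t + (α' - α) * t ^ q := by
  simp only [fQ]; ring

theorem fQd2_antitoneOn (hq : 2 ≤ q) (hα : 0 ≤ α) : AntitoneOn (fQd2 q α) (Ici 0) := by
  intro s hs t _ hst
  have : 0 ≤ q - 1 := by linarith
  simp only [fQd2]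
  gcongr

theorem fQ_mem_Icc_of_roots (hq : 2 ≤ q) (hα : 0 ≤ α) {a b : ℝ} (ha : 0 < a)
    (hfa : fQ q α a = 0) (hfb : fQ q α b = 0) (ht : t ∈ Icc a b) :
    -fQd2 q α a / 2 * ((t - a) * (b - t)) ≤ fQ q α t ∧
      fQ q α t ≤ -fQd2 q α b / 2 * ((t - a) * (b - t)) := by
  have hpos : ∀ s ∈ Ioo a b, s ≠ 0 := fun s hs => (ha.trans hs.1).ne'
  have hcont : ContinuousOn (fQ q α) (Icc a b) := (continuous_fQ (by linarith)).continuousOn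
  have hanti := fQd2_antitoneOn hq hα
  constructor
  · refine mul_sub_mul_sub_le_of_deriv2_le hcont (fun s hs => hasDerivAt_fQ (hpos s hs))
      (fun s hs => hasDerivAt_fQd1 (hpos s hs)) hfa hfb (fun s hs => ?_) ht
    linarith [hanti (mem_Ici.2 ha.le) (mem_Ici.2 (ha.trans hs.1).le) hs.1.le]
  · have := mul_sub_mul_sub_le_of_deriv2_le (f := fun s => -fQ q α s) (m := fQd2 q α b / 2)
      hcont.neg (fun s hs => (hasDerivAt_fQ (hpos s hs)).neg)
      (fun s hs => (hasDerivAt_fQd1 (hpos s hs)).neg) (by simp [hfa]) (by simp [hfb])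
      (fun s hs => by
        linarith [hanti (mem_Ici.2 (ha.trans hs.1).le)
          (mem_Ici.2 ((ha.trans hs.1).le.trans hs.2.le)) hs.2.le]) ht
    linarith

-- `x0 q α` and `x1 q α` are `sInf` and `sSup` of this set.
def rootSet (q α : ℝ) : Set ℝ := {t | 0 < t ∧ fQ q α t = 0}

theorem isClosed_rootSet (hq : 0 < q) : IsClosed (rootSet q α) := by
  have : rootSet q α = fQ q α ⁻¹' {0} ∩ Ici 0 := by
    ext t
    refine ⟨fun ht => ⟨ht.2, ht.1.le⟩, fun ⟨hft, ht⟩ => ⟨ht.lt_of_ne ?_, hft⟩⟩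
    rintro rfl
    simp [fQ_zero hq.ne'] at hft
  rw [this]
  exact (isClosed_singleton.preimage (continuous_fQ hq.le)).inter isClosed_Ici

end Profile

noncomputable def tstar (q : ℝ) : ℝ := √(q / (q - 2))

section Critical

variable {q : ℝ} (hq : 2 < q)
include hq

theorem tstar_pos : 0 < tstar q :=
  sqrt_pos.2 (div_pos (by linarith) (by linarith))

theorem alphaStar_pos : 0 < alphaStar q :=
  mul_pos (div_pos two_pos (by linarith)) (rpow_pos_of_pos (div_pos (by linarith) (by linarith)) _)

theorem alphaStar_mul_tstar_rpow : alphaStar q * tstar q ^ (q - 2) = 2 / q := by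
  have hP : 0 < (q - 2) / q := div_pos (by linarith) (by linarith)
  have htstar : tstar q = ((q - 2) / q) ^ (-(1 / 2 : ℝ)) := by
    rw [tstar, sqrt_eq_rpow, rpow_neg hP.le, ← inv_rpow hP.le, inv_div]
  rw [alphaStar, htstar, ← rpow_mul hP.le, mul_assoc, ← rpow_add hP]
  rw [show q / 2 + -(1 / 2) * (q - 2) = 1 by ring, rpow_one]
  field_simp [show q - 2 ≠ 0 by linarith]

theorem fQ_alphaStar_tstar : fQ q (alphaStar q) (tstar q) = 0 := by
  have hsq : tstar q ^ 2 = q / (q - 2) := sq_sqrt (div_pos (by linarith) (by linarith)).le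
  rw [fQ, rpow_eq_sq_mul_rpow_sub_two (tstar_pos hq), mul_left_comm, alphaStar_mul_tstar_rpow hq,
    hsq]
  field_simp [show q - 2 ≠ 0 by linarith]
  ring

theorem fQd2_alphaStar_tstar : fQd2 q (alphaStar q) (tstar q) = -2 * (q - 2) := by
  rw [fQd2, show alphaStar q * q * (q - 1) * tstar q ^ (q - 2)
      = alphaStar q * tstar q ^ (q - 2) * q * (q - 1) by ring, alphaStar_mul_tstar_rpow hq]
  field_simp [show q ≠ 0 by linarith]
  ring

theorem fQd1_alphaStar {t : ℝ} (ht : 0 < t) :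
    fQd1 q (alphaStar q) t = q * alphaStar q * t * (tstar q ^ (q - 2) - t ^ (q - 2)) := by
  have h2 : q * alphaStar q * tstar q ^ (q - 2) = 2 := by
    rw [mul_assoc, alphaStar_mul_tstar_rpow hq]; field_simp [show q ≠ 0 by linarith]
  rw [fQd1, show q - 1 = 1 + (q - 2) by ring, rpow_add ht, rpow_one]
  linear_combination -t * h2

theorem strictMonoOn_fQ_alphaStar : StrictMonoOn (fQ q (alphaStar q)) (Icc 0 (tstar q)) := by
  refine strictMonoOn_of_hasDerivWithinAt_pos (f' := fQd1 q (alphaStar q)) (convex_Icc _ _)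
    (continuous_fQ (by linarith)).continuousOn ?_ ?_ <;> rw [interior_Icc] <;> intro t ht
  · exact (hasDerivAt_fQ ht.1.ne').hasDerivWithinAt
  · rw [fQd1_alphaStar hq ht.1]
    exact mul_pos (mul_pos (mul_pos (by linarith) (alphaStar_pos hq)) ht.1)
      (sub_pos.2 (rpow_lt_rpow ht.1.le ht.2 (by linarith)))

theorem strictAntiOn_fQ_alphaStar : StrictAntiOn (fQ q (alphaStar q)) (Ici (tstar q)) := by
  refine strictAntiOn_of_hasDerivWithinAt_neg (f' := fQd1 q (alphaStar q)) (convex_Ici _)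
    (continuous_fQ (by linarith)).continuousOn ?_ ?_ <;> rw [interior_Ici] <;> intro t ht
  · exact (hasDerivAt_fQ (tstar_pos hq |>.trans ht).ne').hasDerivWithinAt
  · have ht0 := (tstar_pos hq).trans ht
    rw [fQd1_alphaStar hq ht0]
    exact mul_neg_of_pos_of_neg (mul_pos (mul_pos (by linarith) (alphaStar_pos hq)) ht0)
      (sub_neg.2 (rpow_lt_rpow (tstar_pos hq).le ht (by linarith)))

end Critical

noncomputable def rootBound (q : ℝ) : ℝ := (2 / alphaStar q) ^ (q - 2)⁻¹

section Roots

variable {q α : ℝ} (hq : 2 < q)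
include hq

theorem rootBound_rpow : rootBound q ^ (q - 2) = 2 / alphaStar q :=
  rpow_inv_rpow (div_pos two_pos (alphaStar_pos hq)).le (by linarith)

theorem tstar_lt_rootBound : tstar q < rootBound q := by
  have hR : 0 ≤ rootBound q := (rpow_pos_of_pos (div_pos two_pos (alphaStar_pos hq)) _).le
  rw [← rpow_lt_rpow_iff (tstar_pos hq).le hR (show 0 < q - 2 by linarith), rootBound_rpow hq,
    lt_div_iff₀ (alphaStar_pos hq), mul_comm, alphaStar_mul_tstar_rpow hq,
    div_lt_iff₀ (by linarith)]
  linarith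

theorem lt_rootBound_of_mem_rootSet (hα : alphaStar q / 2 < α) {t : ℝ} (ht : t ∈ rootSet q α) :
    t < rootBound q := by
  obtain ⟨ht0, hft⟩ := ht
  have hR : 0 ≤ rootBound q := (rpow_pos_of_pos (div_pos two_pos (alphaStar_pos hq)) _).le
  have hpow : 0 < t ^ (q - 2) := rpow_pos_of_pos ht0 _
  have hsmall : α * t ^ (q - 2) < 1 := by
    -- at a root, `t ^ 2 * (1 - α * t ^ (q - 2)) = 1`
    rw [fQ, rpow_eq_sq_mul_rpow_sub_two ht0] at hft
    nlinarith [pow_pos ht0 2]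
  rw [← rpow_lt_rpow_iff ht0.le hR (show 0 < q - 2 by linarith), rootBound_rpow hq,
    lt_div_iff₀ (alphaStar_pos hq)]
  nlinarith

theorem fQ_rootBound_neg (hα : alphaStar q / 2 < α) : fQ q α (rootBound q) < 0 := by
  have hR : 0 < rootBound q := rpow_pos_of_pos (div_pos two_pos (alphaStar_pos hq)) _
  have hlarge : 1 < α * rootBound q ^ (q - 2) := by
    rw [rootBound_rpow hq, mul_div_assoc', lt_div_iff₀ (alphaStar_pos hq)]
    linarith
  rw [fQ, rpow_eq_sq_mul_rpow_sub_two hR]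
  nlinarith [pow_pos hR 2]

theorem fQ_tstar_pos (hα : α < alphaStar q) : 0 < fQ q α (tstar q) := by
  rw [fQ_eq_add (alphaStar q), fQ_alphaStar_tstar hq, zero_add]
  exact mul_pos (sub_pos.2 hα) (rpow_pos_of_pos (tstar_pos hq) _)

theorem x0_x1_mem_rootSet_and_lt_tstar (hα : α ∈ Ioo (alphaStar q / 2) (alphaStar q)) :
    x0 q α ∈ rootSet q α ∧ x1 q α ∈ rootSet q α ∧ x0 q α < tstar q ∧ tstar q < x1 q α := by
  have hcont : Continuous (fQ q α) := continuous_fQ (by linarith)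
  obtain ⟨r, hr, hfr⟩ := intermediate_value_Ioo (tstar_pos hq).le hcont.continuousOn
    (show (0 : ℝ) ∈ Ioo (fQ q α 0) (fQ q α (tstar q)) from
      ⟨by rw [fQ_zero (by linarith)]; norm_num, fQ_tstar_pos hq hα.2⟩)
  obtain ⟨r', hr', hfr'⟩ := intermediate_value_Ioo' (tstar_lt_rootBound hq).le hcont.continuousOn
    ⟨fQ_rootBound_neg hq hα.1, fQ_tstar_pos hq hα.2⟩
  have hr_mem : r ∈ rootSet q α := ⟨hr.1, hfr⟩
  have hr'_mem : r' ∈ rootSet q α := ⟨(tstar_pos hq).trans hr'.1, hfr'⟩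
  have hbddBelow : BddBelow (rootSet q α) := ⟨0, fun t ht => ht.1.le⟩
  have hbddAbove : BddAbove (rootSet q α) :=
    ⟨rootBound q, fun t ht => (lt_rootBound_of_mem_rootSet hq hα.1 ht).le⟩
  exact ⟨(isClosed_rootSet (by linarith : (0 : ℝ) < q)).csInf_mem ⟨r, hr_mem⟩ hbddBelow,
    (isClosed_rootSet (by linarith : (0 : ℝ) < q)).csSup_mem ⟨r, hr_mem⟩ hbddAbove,
    (csInf_le hbddBelow hr_mem).trans_lt hr.2, hr'.1.trans_le (le_csSup hbddAbove hr'_mem)⟩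

theorem eventually_mem_Ioo_half :
    ∀ᶠ α in 𝓝[<] alphaStar q, α ∈ Ioo (alphaStar q / 2) (alphaStar q) :=
  Ioo_mem_nhdsLT (half_lt_self (alphaStar_pos hq))

theorem fQ_alphaStar_ge_of_mem_rootSet (hα : α ∈ Ioo (alphaStar q / 2) (alphaStar q)) {t : ℝ}
    (ht : t ∈ rootSet q α) :
    -((alphaStar q - α) * rootBound q ^ q) ≤ fQ q (alphaStar q) t := by
  have hpow : (alphaStar q - α) * t ^ q ≤ (alphaStar q - α) * rootBound q ^ q :=
    mul_le_mul_of_nonneg_left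
      (rpow_le_rpow ht.1.le (lt_rootBound_of_mem_rootSet hq hα.1 ht).le (by linarith))
      (sub_pos.2 hα.2).le
  linarith [fQ_eq_add (q := q) (α := α) (t := t) (alphaStar q), ht.2]

theorem abs_sub_tstar_lt_of_lt_fQ_alphaStar {t d : ℝ} (ht : 0 < t) (hd : d ∈ Icc 0 (tstar q))
    (hlo : fQ q (alphaStar q) (tstar q - d) < fQ q (alphaStar q) t)
    (hhi : fQ q (alphaStar q) (tstar q + d) < fQ q (alphaStar q) t) : |t - tstar q| < d := by
  obtain ⟨hd₀, hdt⟩ := hd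
  refine abs_sub_lt_iff.2 ⟨?_, ?_⟩
  · by_contra! h
    exact (strictAntiOn_fQ_alphaStar hq).antitoneOn (mem_Ici.2 (by linarith))
      (mem_Ici.2 (by linarith)) (by linarith) |>.not_gt hhi
  · by_contra! h
    exact (strictMonoOn_fQ_alphaStar hq).monotoneOn ⟨ht.le, by linarith⟩
      ⟨by linarith, by linarith⟩ (by linarith) |>.not_gt hlo

theorem eventually_forall_mem_rootSet_abs_sub_tstar_lt {δ : ℝ} (hδ : 0 < δ) :
    ∀ᶠ α in 𝓝[<] alphaStar q, ∀ t ∈ rootSet q α, |t - tstar q| < δ := by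
  set d := min δ (tstar q / 2)
  have hdt : d < tstar q := (min_le_right _ _).trans_lt (half_lt_self (tstar_pos hq))
  have hd : 0 < d := lt_min hδ (half_pos (tstar_pos hq))
  set c := max (fQ q (alphaStar q) (tstar q - d)) (fQ q (alphaStar q) (tstar q + d))
  have hc : c < 0 := by
    have hlo := strictMonoOn_fQ_alphaStar hq ⟨by linarith, by linarith⟩
      ⟨(tstar_pos hq).le, le_rfl⟩ (show tstar q - d < tstar q by linarith)
    have hhi := strictAntiOn_fQ_alphaStar hq self_mem_Ici
      (mem_Ici.2 (show tstar q ≤ tstar q + d by linarith)) (show tstar q < tstar q + d by linarith)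
    rw [fQ_alphaStar_tstar hq] at hlo hhi
    exact max_lt hlo hhi
  have hsmall : ∀ᶠ α in 𝓝[<] alphaStar q, (alphaStar q - α) * rootBound q ^ q < -c := by
    have : Tendsto (fun α => (alphaStar q - α) * rootBound q ^ q) (𝓝 (alphaStar q)) (𝓝 0) := by
      simpa using ((tendsto_const_nhds (x := alphaStar q)).sub
        (tendsto_id (x := 𝓝 (alphaStar q)))).mul_const (rootBound q ^ q)
    exact nhdsWithin_le_nhds (this.eventually (gt_mem_nhds (neg_pos.2 hc)))
  have hc_lo : fQ q (alphaStar q) (tstar q - d) ≤ c := le_max_left _ _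
  have hc_hi : fQ q (alphaStar q) (tstar q + d) ≤ c := le_max_right _ _
  filter_upwards [eventually_mem_Ioo_half hq, hsmall] with α hα hαc t ht
  have hft := fQ_alphaStar_ge_of_mem_rootSet hq hα ht
  exact (abs_sub_tstar_lt_of_lt_fQ_alphaStar hq ht.1 ⟨hd.le, hdt.le⟩ (by linarith)
    (by linarith)).trans_le (min_le_left _ _)

theorem tendsto_x0 : Tendsto (x0 q) (𝓝[<] alphaStar q) (𝓝 (tstar q)) :=
  Metric.tendsto_nhds.2 fun δ hδ => by
    filter_upwards [eventually_mem_Ioo_half hq,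
      eventually_forall_mem_rootSet_abs_sub_tstar_lt hq hδ] with α hα h
    exact h _ (x0_x1_mem_rootSet_and_lt_tstar hq hα).1

theorem tendsto_x1 : Tendsto (x1 q) (𝓝[<] alphaStar q) (𝓝 (tstar q)) :=
  Metric.tendsto_nhds.2 fun δ hδ => by
    filter_upwards [eventually_mem_Ioo_half hq,
      eventually_forall_mem_rootSet_abs_sub_tstar_lt hq hδ] with α hα h
    exact h _ (x0_x1_mem_rootSet_and_lt_tstar hq hα).2.1

theorem Iq_mem_Icc (hα : α ∈ Ioo (alphaStar q / 2) (alphaStar q))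
    (hm : 0 < -fQd2 q α (x0 q α) / 2) :
    Iq q α ∈ Icc (π / √(-fQd2 q α (x1 q α) / 2)) (π / √(-fQd2 q α (x0 q α) / 2)) := by
  obtain ⟨⟨hx0, hfx0⟩, ⟨-, hfx1⟩, hx0t, htx1⟩ := x0_x1_mem_rootSet_and_lt_tstar hq hα
  have hα0 : 0 ≤ α := (half_pos (alphaStar_pos hq)).le.trans hα.1.le
  have hbounds {t : ℝ} (ht : t ∈ Ioo (x0 q α) (x1 q α)) :=
    fQ_mem_Icc_of_roots hq.le hα0 hx0 hfx0 hfx1 (Ioo_subset_Icc_self ht)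
  exact integral_one_div_sqrt_mem_Icc (hx0t.trans htx1) hm measurable_fQ
    (fun t ht => (hbounds ht).1) (fun t ht => (hbounds ht).2)

end Roots

theorem tendsto_neg_fQd2_div_two {q : ℝ} (hq : 2 < q) {x : ℝ → ℝ}
    (hx : Tendsto x (𝓝[<] alphaStar q) (𝓝 (tstar q))) :
    Tendsto (fun α => -fQd2 q α (x α) / 2) (𝓝[<] alphaStar q) (𝓝 (q - 2)) := by
  have hα : Tendsto (fun α : ℝ => α) (𝓝[<] alphaStar q) (𝓝 (alphaStar q)) := nhdsWithin_le_nhds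
  have h : Tendsto (fun α => fQd2 q α (x α)) (𝓝[<] alphaStar q)
      (𝓝 (fQd2 q (alphaStar q) (tstar q))) :=
    tendsto_const_nhds.sub (((hα.mul_const q).mul_const (q - 1)).mul
      (hx.rpow_const (Or.inl (tstar_pos hq).ne')))
  rw [fQd2_alphaStar_tstar hq] at h
  simpa using h.neg.div_const 2

/-- For q > 2, I_q(α) → π/√(q-2) as α → α*(q) from the left. -/
theorem stmt_5 (q : ℝ) (hq : 2 < q) :
    Tendsto (Iq q) (nhdsWithin (alphaStar q) (Iio (alphaStar q)))
      (nhds (Real.pi / Real.sqrt (q - 2))) := by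
  have hm := tendsto_neg_fQd2_div_two hq (tendsto_x0 hq)
  have hM := tendsto_neg_fQd2_div_two hq (tendsto_x1 hq)
  have hlim {k : ℝ → ℝ} (hk : Tendsto k (𝓝[<] alphaStar q) (𝓝 (q - 2))) :
      Tendsto (fun α => π / √(k α)) (𝓝[<] alphaStar q) (𝓝 (π / √(q - 2))) :=
    tendsto_const_nhds.div hk.sqrt (sqrt_pos.2 (by linarith)).ne'
  have hbounds : ∀ᶠ α in 𝓝[<] alphaStar q,
      Iq q α ∈ Icc (π / √(-fQd2 q α (x1 q α) / 2)) (π / √(-fQd2 q α (x0 q α) / 2)) := by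
    filter_upwards [eventually_mem_Ioo_half hq,
      hm.eventually (lt_mem_nhds (show (0 : ℝ) < q - 2 by linarith))] with α hα hpos
    exact Iq_mem_Icc hq hα hpos
  exact tendsto_of_tendsto_of_tendsto_of_le_of_le' (hlim hM) (hlim hm)
    (hbounds.mono fun _ h => h.1) (hbounds.mono fun _ h => h.2)
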